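/- Let 𝕄 be a family of subsets of {1,…,n}, and let f : ℝⁿ → ℝ be differentiable and satisfy (ξ, δ, 𝕄)-WRSC with ξ > 0 and 0 < δ < 1. Let x, x^i ∈ ℝⁿ and Γ ⊆ {1,…,n} be such that Γ ∪ supp(x^i − x) ⊆ S for some S ∈ 𝕄 with supp(x) ∪ supp(x^i) ⊆ S. Setting r^i = x^i − x, one has ‖(∇f(x^i))_Γ‖₂ ≤ (δ/ξ)‖r^i‖₂ + (1/ξ)‖(r^i)_Γ‖₂ + ‖(∇f(x))_Γ‖₂. -/

import Mathlib

open scoped RealInnerProductSpace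
open Classical

/-- The restriction `x_S` of a vector `x ∈ ℝⁿ` to a coordinate set `S`:
it agrees with `x` on `S` and is zero elsewhere. -/
noncomputable def restr {n : ℕ} (S : Set (Fin n)) (x : EuclideanSpace ℝ (Fin n)) :
    EuclideanSpace ℝ (Fin n) := WithLp.toLp 2 (fun i => if i ∈ S then x i else 0)

/-- The support `supp(x) = {i : x_i ≠ 0}` of a vector. -/
def supp {n : ℕ} (x : EuclideanSpace ℝ (Fin n)) : Set (Fin n) := {i | x i ≠ 0}

/-- `f` satisfies `(ξ, δ, 𝕄)`-Weak Restricted Strong Convexity: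
`‖x − y − ξ∇_S f(x) + ξ∇_S f(y)‖ ≤ δ‖x − y‖` for all `x, y` and all `S ∈ 𝕄`
with `supp(x) ∪ supp(y) ⊆ S`. -/
def WRSC {n : ℕ} (f : EuclideanSpace ℝ (Fin n) → ℝ) (ξ δ : ℝ)
    (𝕄 : Set (Set (Fin n))) : Prop :=
  ∀ x y : EuclideanSpace ℝ (Fin n), ∀ S ∈ 𝕄, supp x ∪ supp y ⊆ S →
    ‖x - y - ξ • restr S (gradient f x) + ξ • restr S (gradient f y)‖ ≤ δ * ‖x - y‖

lemma restr_apply {n : ℕ} (S : Set (Fin n)) (x : EuclideanSpace ℝ (Fin n)) (i : Fin n) :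
    restr S x i = if i ∈ S then x i else 0 := rfl

lemma restr_restr {n : ℕ} {Γ S : Set (Fin n)} (h : Γ ⊆ S) (x : EuclideanSpace ℝ (Fin n)) :
    restr Γ (restr S x) = restr Γ x := by
  ext i
  simp only [restr_apply]
  by_cases hi : i ∈ Γ
  · simp [hi, h hi]
  · simp [hi]

lemma norm_restr_le {n : ℕ} (Γ : Set (Fin n)) (x : EuclideanSpace ℝ (Fin n)) :
    ‖restr Γ x‖ ≤ ‖x‖ := by
  rw [EuclideanSpace.norm_eq, EuclideanSpace.norm_eq]
  apply Real.sqrt_le_sqrt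
  apply Finset.sum_le_sum
  intro i _
  simp only [restr_apply]
  by_cases hi : i ∈ Γ <;> simp [hi] <;> positivity

/-- Gradient upper-bound step in the proof of Lemma 6.3: if
`Γ ∪ supp(x^i − x) ⊆ S` for some `S ∈ 𝕄` with `supp(x) ∪ supp(x^i) ⊆ S`, then
with `r^i = x^i − x`,
`‖(∇f(x^i))_Γ‖ ≤ (δ/ξ)‖r^i‖ + (1/ξ)‖(r^i)_Γ‖ + ‖(∇f(x))_Γ‖`. -/
theorem wrsc_gradient_head_upper_bound {n : ℕ} (𝕄 : Set (Set (Fin n)))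
    (f : EuclideanSpace ℝ (Fin n) → ℝ) (hf : Differentiable ℝ f)
    (ξ δ : ℝ) (hξ : 0 < ξ) (hδ : δ ∈ Set.Ioo (0 : ℝ) 1)
    (hW : WRSC f ξ δ 𝕄)
    (x xi : EuclideanSpace ℝ (Fin n)) (Γ : Set (Fin n)) (S : Set (Fin n))
    (hS : S ∈ 𝕄) (hΓS : Γ ∪ supp (xi - x) ⊆ S) (hsupp : supp x ∪ supp xi ⊆ S) :
    ‖restr Γ (gradient f xi)‖ ≤
      (δ / ξ) * ‖xi - x‖ + (1 / ξ) * ‖restr Γ (xi - x)‖ +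
        ‖restr Γ (gradient f x)‖ := by
  have hΓ : Γ ⊆ S := fun i hi => hΓS (Or.inl hi)
  set g1 := gradient f xi with hg1
  set g2 := gradient f x with hg2
  set r := xi - x with hr
  have hsupp' : supp xi ∪ supp x ⊆ S := by
    rw [Set.union_comm]; exact hsupp
  have h := hW xi x S hS hsupp'
  -- restrict to Γ
  have hrestr : restr Γ (r - ξ • restr S g1 + ξ • restr S g2)
      = restr Γ r - ξ • restr Γ g1 + ξ • restr Γ g2 := by
    ext i
    simp only [restr_apply]
    by_cases hi : i ∈ Γ
    · have hiS : i ∈ S := hΓ hi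
      simp only [hi, if_true]
      show (r - ξ • restr S g1 + ξ • restr S g2) i = _
      simp only [PiLp.add_apply, PiLp.sub_apply, PiLp.smul_apply, restr_apply, hiS,
        if_true, hi, smul_eq_mul]
    · simp only [hi, if_false]
      show (0:ℝ) = (restr Γ r - ξ • restr Γ g1 + ξ • restr Γ g2) i
      simp [restr_apply, hi]
  have hkey : ‖restr Γ r - ξ • restr Γ g1 + ξ • restr Γ g2‖ ≤ δ * ‖r‖ := by
    rw [← hrestr]
    exact (norm_restr_le Γ _).trans h
  have hbound : ξ * ‖restr Γ g1‖ ≤ δ * ‖r‖ + ‖restr Γ r‖ + ξ * ‖restr Γ g2‖ := by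
    have h1 : ‖ξ • restr Γ g1‖ = ξ * ‖restr Γ g1‖ := by
      rw [norm_smul, Real.norm_eq_abs, abs_of_pos hξ]
    have h2 : ‖ξ • restr Γ g2‖ = ξ * ‖restr Γ g2‖ := by
      rw [norm_smul, Real.norm_eq_abs, abs_of_pos hξ]
    have htri : ‖ξ • restr Γ g1‖ ≤
        ‖restr Γ r + ξ • restr Γ g2‖ + ‖restr Γ r - ξ • restr Γ g1 + ξ • restr Γ g2‖ := by
      have := norm_sub_le (restr Γ r + ξ • restr Γ g2)
        (restr Γ r - ξ • restr Γ g1 + ξ • restr Γ g2)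
      rwa [show (restr Γ r + ξ • restr Γ g2) - (restr Γ r - ξ • restr Γ g1 + ξ • restr Γ g2)
        = ξ • restr Γ g1 by abel] at this
    calc ξ * ‖restr Γ g1‖ = ‖ξ • restr Γ g1‖ := h1.symm
      _ ≤ ‖restr Γ r + ξ • restr Γ g2‖ + ‖restr Γ r - ξ • restr Γ g1 + ξ • restr Γ g2‖ := htri
      _ ≤ (‖restr Γ r‖ + ‖ξ • restr Γ g2‖) + δ * ‖r‖ := by
          exact add_le_add (norm_add_le _ _) hkey
      _ = δ * ‖r‖ + ‖restr Γ r‖ + ξ * ‖restr Γ g2‖ := by rw [h2]; ring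
  calc ‖restr Γ g1‖ = ξ * ‖restr Γ g1‖ / ξ := by field_simp
    _ ≤ (δ * ‖r‖ + ‖restr Γ r‖ + ξ * ‖restr Γ g2‖) / ξ := by gcongr
    _ = (δ / ξ) * ‖r‖ + (1 / ξ) * ‖restr Γ r‖ + ‖restr Γ g2‖ := by field_simp
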